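/- arXiv:0805.3167 — 3 statements merged into one kernel-verified Lean document; each statement's English description precedes it below -/
import Mathlib

section
/- Let ξ be a complex random variable with finite nonzero variance. Then there exist a real θ and a constant κ ≥ 1 such that the random variable e^{iθ}ξ has κ-controlled second moment; that is, E|e^{iθ}ξ|² ≤ κ and for all complex z, w: E[ Re(z·e^{iθ}ξ − w)² · 1_{|ξ| ≤ κ} ] ≥ (1/κ)·Re(z)². -/
/-!
Truncating to `{‖ξ‖ ≤ n}` with `n` large keeps `ξ` non-constant, and after a suitable rotation
`e^{iθ}` the real part `A` of `e^{iθ} ξ` is not even an affine function `y B + c` of its imaginary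
part `B` on that set: if `ξ` lies on a line, rotate the line to a horizontal one. In `L²` of the
truncated measure `A` then has positive distance from the finite-dimensional span of `B` and `1`,
which bounds `E[(a A + b B + c)² ; ‖ξ‖ ≤ n]` below by `δ a²` with `δ > 0`; any `κ ≥ n, 1/δ, E‖ξ‖²`
works.
-/

open MeasureTheory ProbabilityTheory Complex

theorem exists_pos_mul_abs_le_norm_smul_add {E : Type*} [NormedAddCommGroup E] [NormedSpace ℝ E]
    {x : E} {K : Submodule ℝ E} [FiniteDimensional ℝ K]
    (hx : x ∉ K) : ∃ δ > 0, ∀ (a : ℝ), ∀ k ∈ K, δ * |a| ≤ ‖a • x + k‖ := by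
  have hδ : 0 < Metric.infDist x K :=
    (K.closed_of_finiteDimensional.notMem_iff_infDist_pos ⟨0, K.zero_mem⟩).mp hx
  refine ⟨_, hδ, fun a k hk => ?_⟩
  rcases eq_or_ne a 0 with rfl | ha
  · simp
  have hdist : Metric.infDist x K ≤ ‖x + a⁻¹ • k‖ := by
    simpa [dist_eq_norm] using
      Metric.infDist_le_dist_of_mem (K.neg_mem (K.smul_mem a⁻¹ hk)) (x := x)
  calc Metric.infDist x K * |a| ≤ ‖x + a⁻¹ • k‖ * |a| := by gcongr
    _ = ‖a • x + k‖ := by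
      rw [mul_comm, ← Real.norm_eq_abs, ← norm_smul, smul_add, smul_smul,
        mul_inv_cancel₀ ha, one_smul]

section

variable {Ω : Type*} [MeasurableSpace Ω]

theorem integral_norm_sub_integral_sq_eq_zero_of_ae_eq_const {E : Type*} [NormedAddCommGroup E]
    [NormedSpace ℝ E] [CompleteSpace E] {μ : Measure Ω} [IsProbabilityMeasure μ] {f : Ω → E} {c : E}
    (h : f =ᵐ[μ] fun _ => c) : ∫ ω, ‖f ω - ∫ ω', f ω' ∂μ‖ ^ 2 ∂μ = 0 := by
  rw [integral_congr_ae h, integral_const, probReal_univ, one_smul]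
  exact integral_eq_zero_of_ae (h.mono fun ω hω => by simp [hω])

theorem exists_not_ae_eq_const_restrict_norm_le {E : Type*} [NormedAddCommGroup E]
    {μ : Measure Ω} {f : Ω → E} (h : ¬ ∃ c, f =ᵐ[μ] fun _ => c) :
    ∃ n : ℕ, ¬ ∃ c, f =ᵐ[μ.restrict {ω | ‖f ω‖ ≤ n}] fun _ => c := by
  by_contra! H
  choose c hc using H
  set S : ℕ → Set Ω := fun n => {ω | ‖f ω‖ ≤ n}
  have hS_mono : Monotone S := fun m n hmn ω (hω : ‖f ω‖ ≤ m) =>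
    show ‖f ω‖ ≤ n from hω.trans (by exact_mod_cast hmn)
  have hS_univ : ⋃ n, S n = Set.univ :=
    Set.eq_univ_of_forall fun ω => Set.mem_iUnion.2 (exists_nat_ge ‖f ω‖)
  obtain ⟨N, hN⟩ : ∃ N, μ (S N) ≠ 0 := by
    by_contra! H0
    have hμ : μ = 0 := by
      rw [← Measure.measure_univ_eq_zero, ← hS_univ]
      exact measure_iUnion_null H0
    exact h ⟨0, by simp [hμ, Filter.EventuallyEq]⟩
  have hc_eq : ∀ n ≥ N, c n = c N := by
    intro n hn
    have : (ae (μ.restrict (S N))).NeBot := ae_neBot.2 (by simpa using hN)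
    have hcn : f =ᵐ[μ.restrict (S N)] fun _ => c n :=
      ae_restrict_of_ae_restrict_of_subset (hS_mono hn) (hc n)
    exact Filter.eventually_const.1 (hcn.symm.trans (hc N))
  refine h ⟨c N, ?_⟩
  rw [← Measure.restrict_univ (μ := μ), ← hS_univ]
  refine (ae_restrict_iUnion_iff _ _).2 fun n => ?_
  have hcn := hc (max n N)
  rw [hc_eq _ (le_max_right _ _)] at hcn
  exact ae_restrict_of_ae_restrict_of_subset (hS_mono (le_max_left _ _)) hcn

theorem exists_rotation_re_not_ae_affine_im {ν : Measure Ω} {ξ : Ω → ℂ}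
    (h : ¬ ∃ c, ξ =ᵐ[ν] fun _ => c) :
    ∃ θ : ℝ, ∀ y c : ℝ,
      ¬ (fun ω => (exp (θ * I) * ξ ω).re) =ᵐ[ν] fun ω => y * (exp (θ * I) * ξ ω).im + c := by
  by_cases h0 : ∀ y c : ℝ, ¬ (fun ω => (ξ ω).re) =ᵐ[ν] fun ω => y * (ξ ω).im + c
  · exact ⟨0, by simpa using h0⟩
  push Not at h0
  obtain ⟨y, c, hyc⟩ := h0
  -- rotating by `arg (i - y)` makes the imaginary part `(Re ξ - y Im ξ) / ‖i - y‖`, a constant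
  set u : ℂ := I - y
  refine ⟨arg u, fun y' c' hy'c' => h ?_⟩
  set e := exp (arg u * I)
  have hu : (‖u‖ : ℂ) * e = u := norm_mul_exp_arg_mul_I u
  have hu0 : ‖u‖ ≠ 0 := by
    rw [norm_ne_zero_iff]
    intro hu0
    simpa [u] using congrArg im hu0
  have him : ∀ᵐ ω ∂ν, (e * ξ ω).im = c / ‖u‖ := by
    filter_upwards [hyc] with ω hω
    rw [eq_div_iff hu0, mul_comm, ← im_ofReal_mul, ← mul_assoc, hu]
    simp [u, hω]
  refine ⟨e⁻¹ * ⟨y' * (c / ‖u‖) + c', c / ‖u‖⟩, ?_⟩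
  filter_upwards [hy'c', him] with ω hre him
  rw [eq_inv_mul_iff_mul_eq₀ (exp_ne_zero _)]
  exact Complex.ext (hre.trans (by rw [him])) him

theorem memLp_restrict_setOf_norm_le {E : Type*} [NormedAddCommGroup E] {μ : Measure Ω}
    [IsFiniteMeasure μ] {f : Ω → E} (hf : StronglyMeasurable f) (r : ℝ) (p : ENNReal) :
    MemLp f p (μ.restrict {ω | ‖f ω‖ ≤ r}) :=
  .of_bound hf.aestronglyMeasurable r <|
    ae_restrict_of_forall_mem (measurableSet_le hf.norm.measurable measurable_const) fun _ hω => hω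


theorem MeasureTheory.Lp.norm_sq_eq_integral_sq {ν : Measure Ω} (g : Lp ℝ 2 ν) :
    ‖g‖ ^ 2 = ∫ ω, g ω ^ 2 ∂ν := by
  rw [← real_inner_self_eq_norm_sq, L2.inner_def]
  simp only [real_inner_self_eq_norm_sq, Real.norm_eq_abs, sq_abs]

theorem exists_pos_mul_sq_le_integral_sq {ν : Measure Ω} [IsFiniteMeasure ν] {A B : Ω → ℝ}
    (hA : MemLp A 2 ν) (hB : MemLp B 2 ν) (h : ∀ y c : ℝ, ¬ A =ᵐ[ν] fun ω => y * B ω + c) :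
    ∃ δ > 0, ∀ a b c : ℝ, δ * a ^ 2 ≤ ∫ ω, (a * A ω + b * B ω + c) ^ 2 ∂ν := by
  set fA := hA.toLp A
  set fB := hB.toLp B
  set f1 := (memLp_const (1 : ℝ)).toLp (fun _ : Ω => (1 : ℝ)) (μ := ν)
  have hspan : ∀ b c : ℝ, ((b • fB + c • f1 : Lp ℝ 2 ν) : Ω → ℝ) =ᵐ[ν] fun ω => b * B ω + c := by
    intro b c
    filter_upwards [Lp.coeFn_add (b • fB) (c • f1), Lp.coeFn_smul b fB, Lp.coeFn_smul c f1,
      hB.coeFn_toLp, (memLp_const (1 : ℝ)).coeFn_toLp (μ := ν)] with ω h1 h2 h3 h4 h5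
    rw [h1, Pi.add_apply, h2, h3, Pi.smul_apply, Pi.smul_apply, h4, h5, smul_eq_mul,
      smul_eq_mul, mul_one]
  have hA_notMem : fA ∉ Submodule.span ℝ {fB, f1} := by
    rw [Submodule.mem_span_pair]
    rintro ⟨y, c, hyc⟩
    have hspan' := hspan y c
    rw [hyc] at hspan'
    exact h y c (hA.coeFn_toLp.symm.trans hspan')
  have := FiniteDimensional.span_of_finite ℝ (Set.toFinite {fB, f1})
  obtain ⟨δ, hδ, hle⟩ := exists_pos_mul_abs_le_norm_smul_add hA_notMem
  refine ⟨δ ^ 2, by positivity, fun a b c => ?_⟩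
  have hcomb : ((a • fA + (b • fB + c • f1) : Lp ℝ 2 ν) : Ω → ℝ)
      =ᵐ[ν] fun ω => a * A ω + b * B ω + c := by
    filter_upwards [Lp.coeFn_add (a • fA) (b • fB + c • f1), Lp.coeFn_smul a fA,
      hA.coeFn_toLp, hspan b c] with ω h1 h2 h3 h4
    rw [h1, Pi.add_apply, h2, Pi.smul_apply, h3, h4, smul_eq_mul, add_assoc]
  have hk : b • fB + c • f1 ∈ Submodule.span ℝ {fB, f1} :=
    Submodule.mem_span_pair.mpr ⟨b, c, rfl⟩
  calc δ ^ 2 * a ^ 2 = (δ * |a|) ^ 2 := by rw [mul_pow, sq_abs]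
    _ ≤ ‖a • fA + (b • fB + c • f1)‖ ^ 2 := by gcongr; exact hle a _ hk
    _ = ∫ ω, (a * A ω + b * B ω + c) ^ 2 ∂ν := by
      rw [Lp.norm_sq_eq_integral_sq]
      exact integral_congr_ae (hcomb.fun_comp (· ^ 2))

end

theorem stmt5_general {Ω : Type*} [MeasureSpace Ω] [IsProbabilityMeasure (ℙ : Measure Ω)]
    (ξ : Ω → ℂ) (hmeas : Measurable ξ)
    (hvar : (∫ ω, ‖ξ ω - ∫ ω', ξ ω'‖ ^ 2) ≠ 0) :
    ∃ θ κ : ℝ, 1 ≤ κ ∧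
      (∫ ω, ‖Complex.exp (θ * Complex.I) * ξ ω‖ ^ 2) ≤ κ ∧
      ∀ z w : ℂ, (1 / κ) * z.re ^ 2 ≤
        ∫ ω in {ω | ‖ξ ω‖ ≤ κ},
          ((z * (Complex.exp (θ * Complex.I) * ξ ω) - w).re) ^ 2 := by
  have hξ : ¬ ∃ c, ξ =ᵐ[ℙ] fun _ => c :=
    fun ⟨_, hc⟩ => hvar (integral_norm_sub_integral_sq_eq_zero_of_ae_eq_const hc)
  obtain ⟨n, hn⟩ := exists_not_ae_eq_const_restrict_norm_le hξ
  obtain ⟨θ, hθ⟩ := exists_rotation_re_not_ae_affine_im hn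
  have hL2 (r : ℝ) :
      MemLp (fun ω => exp (θ * I) * ξ ω) 2 ((ℙ : Measure Ω).restrict {ω | ‖ξ ω‖ ≤ r}) :=
    (memLp_restrict_setOf_norm_le hmeas.stronglyMeasurable r 2).const_mul _
  obtain ⟨δ, hδ, hlow⟩ := exists_pos_mul_sq_le_integral_sq (hL2 n).re (hL2 n).im hθ
  set κ := max (max 1 (n : ℝ)) (max δ⁻¹ (∫ ω, ‖ξ ω‖ ^ 2))
  have hnorm (ω : Ω) : ‖exp (θ * I) * ξ ω‖ = ‖ξ ω‖ := by
    simp [norm_exp_ofReal_mul_I]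
  refine ⟨θ, κ, le_max_of_le_left (le_max_left _ _), ?_, fun z w => ?_⟩
  · simp only [hnorm]
    exact le_max_of_le_right (le_max_right _ _)
  have hre (ω : Ω) : (z * (exp (θ * I) * ξ ω) - w).re
      = z.re * (exp (θ * I) * ξ ω).re + -z.im * (exp (θ * I) * ξ ω).im + -w.re := by
    simp only [sub_re, mul_re]
    ring
  have hκ : κ⁻¹ ≤ δ := inv_le_of_inv_le₀ hδ (le_max_of_le_right (le_max_left _ _))
  simp only [hre]
  calc 1 / κ * z.re ^ 2 ≤ δ * z.re ^ 2 := by rw [one_div]; gcongr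
    _ ≤ _ := hlow z.re (-z.im) (-w.re)
    _ ≤ _ := by
      refine setIntegral_mono_set ?_ (.of_forall fun _ => sq_nonneg _) ?_
      · exact ((((hL2 κ).re.const_mul _).add ((hL2 κ).im.const_mul _)).add
          (memLp_const _)).integrable_sq
      · exact Filter.Eventually.of_forall fun ω (hω : ‖ξ ω‖ ≤ n) =>
          hω.trans (le_max_of_le_left (le_max_right _ _))

/-- Any complex random variable with finite nonzero variance can be rotated by a
phase `e^{iθ}` so as to have `κ`-controlled second moment for some `κ ≥ 1`. -/
theorem stmt5 {Ω : Type*} [MeasureSpace Ω] [IsProbabilityMeasure (ℙ : Measure Ω)]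
    (ξ : Ω → ℂ) (hmeas : Measurable ξ) (hL2 : MemLp ξ 2 ℙ)
    (hvar : (∫ ω, ‖ξ ω - ∫ ω', ξ ω'‖ ^ 2) ≠ 0) :
    ∃ θ κ : ℝ, 1 ≤ κ ∧
      (∫ ω, ‖Complex.exp (θ * Complex.I) * ξ ω‖ ^ 2) ≤ κ ∧
      ∀ z w : ℂ, (1 / κ) * z.re ^ 2 ≤
        ∫ ω in {ω | ‖ξ ω‖ ≤ κ},
          ((z * (Complex.exp (θ * Complex.I) * ξ ω) - w).re) ^ 2 :=
  stmt5_general ξ hmeas hvar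
end

section
/- (Anti-concentration for κ-controlled sums) Let κ ≥ 1 and let ξ_1,...,ξ_n be independent complex random variables each with κ-controlled second moment. Then there is a constant c > 0 depending only on κ such that for every z ∈ ℂ and every unit vector (v_1,...,v_n) ∈ ℂ^n, P(|ξ_1 v_1 + ... + ξ_n v_n − z| ≤ c) ≤ 1 − c. -/
open MeasureTheory ProbabilityTheory Complex

/-- A complex random variable `ξ` has `κ`-controlled second moment if `E|ξ|² ≤ κ`
and `E[Re(zξ − w)² · 1_{|ξ| ≤ κ}] ≥ Re(z)²/κ` for all complex `z, w`. -/
def Controlled {Ω : Type*} [MeasureSpace Ω] (κ : ℝ) (ξ : Ω → ℂ) : Prop :=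
  ((∫ ω, ‖ξ ω‖ ^ 2) ≤ κ) ∧
  ∀ z w : ℂ, (1 / κ) * z.re ^ 2 ≤ ∫ ω in {ω | ‖ξ ω‖ ≤ κ}, ((z * ξ ω - w).re) ^ 2

/-!
Rotate `v` by a unit scalar `u` so that the real parts of the `u vⱼ` carry at least half of its
mass, and let `φ` be the characteristic function of `Y = κ⁻¹ Re (u (∑ ξⱼ vⱼ - z))` at frequency
one. By independence `‖φ‖²` is the product of the `‖E exp (i Xⱼ)‖²`. Symmetrization gives
`1 - ‖E exp (i X)‖² = E (1 - cos (X - X'))` for an independent copy `X'`; on the truncation event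
`‖ξ‖ ≤ κ` the integrand is at least `(X - X')² / 8`, which the second condition of `Controlled`
bounds from below (taken at `z = 1, w = 0`, that condition also bounds the probability of the
truncation event from below). Hence `‖φ‖² ≤ 1 - 1 / (32 κ⁶)`, whereas if `|Y| ≤ c` with
probability more than `1 - c`, then `Re φ = E cos Y > 1 - 3c`.
-/

lemma Real.exp_neg_le_one_sub_half {x : ℝ} (h0 : 0 ≤ x) (h1 : x ≤ 1) :
    Real.exp (-x) ≤ 1 - x / 2 := by
  have hexp : 1 + x ≤ Real.exp x := by linarith [Real.add_one_le_exp x]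
  rw [Real.exp_neg, inv_le_iff_one_le_mul₀ (Real.exp_pos x)]
  nlinarith

lemma exists_norm_eq_one_sum_sq_norm_le {ι : Type*} [Fintype ι] (v : ι → ℂ) :
    ∃ u : ℂ, ‖u‖ = 1 ∧ ∑ j, ‖v j‖ ^ 2 ≤ 2 * ∑ j, (u * v j).re ^ 2 := by
  have hsplit : ∑ j, ‖v j‖ ^ 2 = ∑ j, (v j).re ^ 2 + ∑ j, (v j).im ^ 2 := by
    rw [← Finset.sum_add_distrib]
    exact Finset.sum_congr rfl fun j _ => by rw [Complex.sq_norm, normSq_apply]; ring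
  by_cases hre : ∑ j, (v j).im ^ 2 ≤ ∑ j, (v j).re ^ 2
  · exact ⟨1, by simp, by simp only [one_mul]; linarith⟩
  · exact ⟨-I, by simp, by simp only [neg_mul, neg_re, I_mul_re, neg_neg]; linarith⟩

section CharacteristicFunction

variable {Ω : Type*} [MeasurableSpace Ω] {μ : Measure Ω} {X : Ω → ℝ}

lemma integrable_cos_comp [IsFiniteMeasure μ] (hX : Measurable X) :
    Integrable (fun ω => Real.cos (X ω)) μ :=
  (integrable_const (1 : ℝ)).mono' (by fun_prop)
    (ae_of_all _ fun ω => by simpa using Real.abs_cos_le_one _)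

lemma integrable_cexp_ofReal_mul_I [IsFiniteMeasure μ] (hX : Measurable X) :
    Integrable (fun ω => cexp (X ω * I)) μ :=
  (integrable_const (1 : ℝ)).mono' (by fun_prop)
    (ae_of_all _ fun ω => (norm_exp_ofReal_mul_I (X ω)).le)

lemma one_sub_re_integral_cexp_ofReal_mul_I [IsProbabilityMeasure μ] (hX : Measurable X) :
    1 - (∫ ω, cexp (X ω * I) ∂μ).re = ∫ ω, (1 - Real.cos (X ω)) ∂μ := by
  rw [integral_sub (integrable_const 1) (integrable_cos_comp hX)]
  simp_rw [← exp_ofReal_mul_I_re]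
  rw [show ∫ ω, (cexp (X ω * I)).re ∂μ = (∫ ω, cexp (X ω * I) ∂μ).re from
    integral_re (integrable_cexp_ofReal_mul_I hX)]
  simp

lemma one_sub_sq_norm_integral_cexp_ofReal_mul_I [IsProbabilityMeasure μ] (hX : Measurable X) :
    1 - ‖∫ ω, cexp (X ω * I) ∂μ‖ ^ 2 = ∫ p, (1 - Real.cos (X p.1 - X p.2)) ∂μ.prod μ := by
  have hconj : ∀ p : Ω × Ω, cexp (↑(X p.1 - X p.2) * I)
      = cexp (X p.1 * I) * (starRingEnd ℂ) (cexp (X p.2 * I)) := fun p => by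
    rw [← exp_conj, ← exp_add, map_mul, conj_ofReal, conj_I]
    push_cast
    ring_nf
  have hprod : ‖∫ ω, cexp (X ω * I) ∂μ‖ ^ 2
      = (∫ p, cexp (↑(X p.1 - X p.2) * I) ∂μ.prod μ).re := by
    simp_rw [hconj]
    rw [integral_prod_mul (fun ω => cexp (X ω * I)) (fun ω => (starRingEnd ℂ) (cexp (X ω * I))),
      integral_conj, mul_conj, ofReal_re, normSq_eq_norm_sq]
  rw [hprod, one_sub_re_integral_cexp_ofReal_mul_I (by fun_prop)]

lemma measureReal_mul_le_eight_mul_one_sub_sq_norm_integral_cexp [IsProbabilityMeasure μ]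
    (hX : Measurable X) {A : Set Ω} (hA : MeasurableSet A) (hXA : ∀ ω ∈ A, |X ω| ≤ 1) {m : ℝ}
    (hm : ∀ x ∈ A, m ≤ ∫ y in A, (X x - X y) ^ 2 ∂μ) :
    μ.real A * m ≤ 8 * (1 - ‖∫ ω, cexp (X ω * I) ∂μ‖ ^ 2) := by
  have hdiff : ∀ p ∈ A ×ˢ A, |X p.1 - X p.2| ≤ 2 := fun p hp =>
    (abs_sub _ _).trans (by linarith [hXA _ hp.1, hXA _ hp.2])
  have hsq : Integrable (fun p : Ω × Ω => (X p.1 - X p.2) ^ 2)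
      ((μ.restrict A).prod (μ.restrict A)) := by
    rw [Measure.prod_restrict]
    refine (integrable_const (4 : ℝ)).mono' (by fun_prop)
      (ae_restrict_of_forall_mem (hA.prod hA) fun p hp => ?_)
    rw [Real.norm_eq_abs, abs_pow]
    nlinarith [hdiff p hp, abs_nonneg (X p.1 - X p.2)]
  have hcos : Integrable (fun p : Ω × Ω => 8 * (1 - Real.cos (X p.1 - X p.2))) (μ.prod μ) :=
    ((integrable_const 1).sub (integrable_cos_comp (by fun_prop))).const_mul 8
  calc μ.real A * m = ∫ _ in A, m ∂μ := by rw [setIntegral_const, smul_eq_mul]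
    _ ≤ ∫ x in A, ∫ y in A, (X x - X y) ^ 2 ∂μ ∂μ :=
      setIntegral_mono_on (integrableOn_const (measure_ne_top _ _)) hsq.integral_prod_left hA hm
    _ = ∫ p in A ×ˢ A, (X p.1 - X p.2) ^ 2 ∂μ.prod μ := by
      rw [← Measure.prod_restrict]; exact (integral_prod _ hsq).symm
    _ ≤ ∫ p in A ×ˢ A, 8 * (1 - Real.cos (X p.1 - X p.2)) ∂μ.prod μ := by
      refine setIntegral_mono_on (by rwa [IntegrableOn, ← Measure.prod_restrict]) hcos.integrableOn
        (hA.prod hA) fun p hp => ?_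
      have hcos_le := Real.cos_le_one_sub_mul_cos_sq
        ((hdiff p hp).trans (by linarith [Real.pi_gt_three]))
      have hpi : 1 / 8 ≤ 2 / Real.pi ^ 2 := by
        rw [div_le_div_iff₀ (by norm_num) (by positivity)]
        nlinarith [Real.pi_lt_four, Real.pi_pos]
      nlinarith [sq_nonneg (X p.1 - X p.2)]
    _ ≤ ∫ p, 8 * (1 - Real.cos (X p.1 - X p.2)) ∂μ.prod μ :=
      setIntegral_le_integral hcos (ae_of_all _ fun p => by
        simp only [Pi.zero_apply]; linarith [Real.cos_le_one (X p.1 - X p.2)])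
    _ = 8 * (1 - ‖∫ ω, cexp (X ω * I) ∂μ‖ ^ 2) := by
      rw [integral_const_mul, one_sub_sq_norm_integral_cexp_ofReal_mul_I hX]

lemma measureReal_abs_le_le_of_sq_norm_integral_cexp_le [IsProbabilityMeasure μ]
    (hX : Measurable X) {c δ : ℝ} (hc : 0 ≤ c) (hcδ : 6 * c ≤ δ)
    (hφ : ‖∫ ω, cexp (X ω * I) ∂μ‖ ^ 2 ≤ 1 - δ) :
    μ.real {ω | |X ω| ≤ c} ≤ 1 - c := by
  set φ := ∫ ω, cexp (X ω * I) ∂μ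
  set E := {ω | |X ω| ≤ c}
  have hE : MeasurableSet E := measurableSet_le (by fun_prop) measurable_const
  have hc6 : c ≤ 1 / 6 := by nlinarith [sq_nonneg ‖φ‖]
  have hpoint : ∀ ω, 1 - Real.cos (X ω) ≤ c + 2 * Eᶜ.indicator 1 ω := by
    intro ω
    by_cases hω : ω ∈ E
    · have hsq : X ω ^ 2 ≤ c ^ 2 := sq_le_sq' (abs_le.1 hω).1 (abs_le.1 hω).2
      rw [Set.indicator_of_notMem (Set.notMem_compl_iff.2 hω)]
      nlinarith [Real.one_sub_sq_div_two_le_cos (x := X ω)]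
    · rw [Set.indicator_of_mem hω, Pi.one_apply]
      linarith [Real.neg_one_le_cos (X ω)]
  have hindicator : Integrable (fun ω => 2 * Eᶜ.indicator (1 : Ω → ℝ) ω) μ :=
    ((integrable_const (1 : ℝ)).indicator hE.compl).const_mul 2
  have hmean : 1 - φ.re ≤ c + 2 * (1 - μ.real E) := by
    calc 1 - φ.re = ∫ ω, (1 - Real.cos (X ω)) ∂μ := one_sub_re_integral_cexp_ofReal_mul_I hX
      _ ≤ ∫ ω, (c + 2 * Eᶜ.indicator 1 ω) ∂μ :=
          integral_mono ((integrable_const 1).sub (integrable_cos_comp hX))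
            ((integrable_const c).add hindicator) hpoint
      _ = c + 2 * (1 - μ.real E) := by
          rw [integral_add (integrable_const c) hindicator, integral_const_mul,
            integral_indicator_one hE.compl, measureReal_compl hE]
          simp
  by_contra! hlt
  have hre : φ.re ^ 2 ≤ ‖φ‖ ^ 2 := by
    rw [← sq_abs φ.re]
    exact pow_le_pow_left₀ (abs_nonneg _) (abs_re_le_norm φ) 2
  nlinarith

end CharacteristicFunction

namespace Controlled

variable {Ω : Type*} [MeasureSpace Ω] {κ : ℝ} {ξ : Ω → ℂ}

lemma inv_pow_three_le_measureReal [IsFiniteMeasure (ℙ : Measure Ω)] (hκ : 0 < κ)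
    (h : Controlled κ ξ) : κ⁻¹ ^ 3 ≤ (ℙ : Measure Ω).real {ω | ‖ξ ω‖ ≤ κ} := by
  have hre := h.2 1 0
  simp only [one_re, one_pow, mul_one, one_mul, sub_zero] at hre
  have hbound := norm_setIntegral_le_of_norm_le_const (μ := ℙ) (f := fun ω => (ξ ω).re ^ 2)
    (measure_lt_top _ {ω | ‖ξ ω‖ ≤ κ}) (C := κ ^ 2) fun ω (hω : ‖ξ ω‖ ≤ κ) => by
      rw [norm_pow, Real.norm_eq_abs]
      exact pow_le_pow_left₀ (abs_nonneg _) ((abs_re_le_norm _).trans hω) 2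
  have hP := hre.trans ((le_abs_self _).trans hbound)
  rw [inv_pow, inv_le_iff_one_le_mul₀ (by positivity)]
  rw [one_div, inv_le_iff_one_le_mul₀ hκ] at hP
  nlinarith

lemma sq_norm_integral_cexp_le [IsProbabilityMeasure (ℙ : Measure Ω)] (hκ : 0 < κ)
    (hξ : Measurable ξ) (h : Controlled κ ξ) {a : ℂ} (ha : ‖a‖ ≤ 1) :
    ‖∫ ω, cexp (↑(κ⁻¹ * (a * ξ ω).re) * I)‖ ^ 2 ≤ 1 - a.re ^ 2 / (8 * κ ^ 6) := by
  set X : Ω → ℝ := fun ω => κ⁻¹ * (a * ξ ω).re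
  set A := {ω | ‖ξ ω‖ ≤ κ}
  have hXA : ∀ ω ∈ A, |X ω| ≤ 1 := fun ω (hω : ‖ξ ω‖ ≤ κ) => by
    have hnorm : ‖a * ξ ω‖ ≤ κ := by
      rw [norm_mul]; nlinarith [norm_nonneg a, norm_nonneg (ξ ω)]
    rw [abs_mul, abs_of_pos (inv_pos.2 hκ), inv_mul_le_iff₀ hκ, mul_one]
    exact (abs_re_le_norm _).trans hnorm
  have hm : ∀ x ∈ A, κ⁻¹ * (κ⁻¹ * a.re) ^ 2 ≤ ∫ y in A, (X x - X y) ^ 2 := fun x _ => by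
    have hre : ∀ y, ((κ⁻¹ * a * ξ y - X x : ℂ).re) ^ 2 = (X x - X y) ^ 2 := fun y => by
      rw [mul_assoc, sub_re, re_ofReal_mul, ofReal_re]
      ring
    have hc := h.2 (κ⁻¹ * a) (X x)
    simp only [hre, one_div, re_ofReal_mul] at hc
    exact hc
  have key := measureReal_mul_le_eight_mul_one_sub_sq_norm_integral_cexp
    (by fun_prop) (measurableSet_le (by fun_prop) measurable_const) hXA hm
  have hP := mul_le_mul_of_nonneg_right (h.inv_pow_three_le_measureReal hκ)
    (by positivity : 0 ≤ κ⁻¹ * (κ⁻¹ * a.re) ^ 2)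
  have hκ6 : κ⁻¹ ^ 3 * (κ⁻¹ * (κ⁻¹ * a.re) ^ 2) = a.re ^ 2 / κ ^ 6 := by
    field_simp
  rw [hκ6] at hP
  have h8 : a.re ^ 2 / (8 * κ ^ 6) = a.re ^ 2 / κ ^ 6 / 8 := by ring
  linarith [hP.trans key]

end Controlled

lemma sq_norm_integral_cexp_re_sum_le {Ω ι : Type*} [MeasureSpace Ω]
    [IsProbabilityMeasure (ℙ : Measure Ω)] [Fintype ι] {κ : ℝ} (hκ : 0 < κ)
    {ξ : ι → Ω → ℂ} (hξ : ∀ j, Measurable (ξ j)) (hind : iIndepFun ξ ℙ)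
    (hctrl : ∀ j, Controlled κ (ξ j)) {a : ι → ℂ} (ha : ∀ j, ‖a j‖ ≤ 1) (b : ℝ) :
    ‖∫ ω, cexp (↑(κ⁻¹ * ((∑ j, a j * ξ j ω).re - b)) * I)‖ ^ 2
      ≤ Real.exp (-(∑ j, (a j).re ^ 2) / (8 * κ ^ 6)) := by
  have hfactor : ∀ ω, cexp (↑(κ⁻¹ * ((∑ j, a j * ξ j ω).re - b)) * I)
      = cexp (↑(-(κ⁻¹ * b)) * I) * ∏ j, cexp (↑(κ⁻¹ * (a j * ξ j ω).re) * I) := fun ω => by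
    rw [← Complex.exp_sum, ← Complex.exp_add, re_sum]
    push_cast
    rw [← Finset.sum_mul, ← Finset.mul_sum]
    ring_nf
  simp_rw [hfactor]
  rw [integral_const_mul, norm_mul, norm_exp_ofReal_mul_I, one_mul,
    hind.integral_fun_prod_comp (f := fun j x => cexp (↑(κ⁻¹ * (a j * x).re) * I))
      (fun j => (hξ j).aemeasurable) (fun j => by fun_prop),
    norm_prod, ← Finset.prod_pow]
  calc ∏ j, ‖∫ ω, cexp (↑(κ⁻¹ * (a j * ξ j ω).re) * I)‖ ^ 2
      ≤ ∏ j, Real.exp (-((a j).re ^ 2 / (8 * κ ^ 6))) :=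
        Finset.prod_le_prod (fun j _ => by positivity) fun j _ =>
          ((hctrl j).sq_norm_integral_cexp_le hκ (hξ j) (ha j)).trans
            (by linarith [Real.add_one_le_exp (-((a j).re ^ 2 / (8 * κ ^ 6)))])
    _ = Real.exp (-(∑ j, (a j).re ^ 2) / (8 * κ ^ 6)) := by
        rw [← Real.exp_sum, Finset.sum_neg_distrib, ← Finset.sum_div, neg_div]

lemma exists_sq_norm_integral_cexp_re_mul_le {Ω ι : Type*} [MeasureSpace Ω]
    [IsProbabilityMeasure (ℙ : Measure Ω)] [Fintype ι] {κ : ℝ} (hκ : 1 ≤ κ)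
    {ξ : ι → Ω → ℂ} (hξ : ∀ j, Measurable (ξ j)) (hind : iIndepFun ξ ℙ)
    (hctrl : ∀ j, Controlled κ (ξ j)) (z : ℂ) {v : ι → ℂ} (hv : ∑ j, ‖v j‖ ^ 2 = 1) :
    ∃ u : ℂ, ‖u‖ = 1 ∧
      ‖∫ ω, cexp (↑(κ⁻¹ * (u * ((∑ j, ξ j ω * v j) - z)).re) * I)‖ ^ 2
        ≤ 1 - 1 / (32 * κ ^ 6) := by
  have hκ6 : 1 ≤ κ ^ 6 := one_le_pow₀ hκ
  obtain ⟨u, hu, hre⟩ := exists_norm_eq_one_sum_sq_norm_le v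
  have huv : ∀ j, ‖u * v j‖ ≤ 1 := fun j => by
    rw [norm_mul, hu, one_mul, ← sq_le_one_iff₀ (norm_nonneg _), ← hv]
    exact Finset.single_le_sum (f := fun j => ‖v j‖ ^ 2) (fun _ _ => by positivity)
      (Finset.mem_univ j)
  have hS : ∀ ω, u * ((∑ j, ξ j ω * v j) - z) = ∑ j, u * v j * ξ j ω - u * z := fun ω => by
    rw [mul_sub, Finset.mul_sum]
    exact congrArg (· - u * z) (Finset.sum_congr rfl fun j _ => by ring)
  have hsum : 1 / (16 * κ ^ 6) ≤ (∑ j, (u * v j).re ^ 2) / (8 * κ ^ 6) := by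
    rw [div_le_div_iff₀ (by positivity) (by positivity)]
    nlinarith
  refine ⟨u, hu, ?_⟩
  simp_rw [hS, sub_re]
  calc _ ≤ Real.exp (-(∑ j, (u * v j).re ^ 2) / (8 * κ ^ 6)) :=
        sq_norm_integral_cexp_re_sum_le (by linarith) hξ hind hctrl huv _
    _ ≤ Real.exp (-(1 / (16 * κ ^ 6))) := by rw [Real.exp_le_exp, neg_div]; linarith
    _ ≤ 1 - 1 / (16 * κ ^ 6) / 2 :=
        Real.exp_neg_le_one_sub_half (by positivity) (by rw [div_le_one (by positivity)]; linarith)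
    _ = 1 - 1 / (32 * κ ^ 6) := by ring

/-- Anti-concentration for linear forms in independent `κ`-controlled variables:
there is `c > 0` depending only on `κ` such that for every `z` and unit vector `v`,
`P(|ξ₁v₁ + ⋯ + ξₙvₙ − z| ≤ c) ≤ 1 − c`. -/
theorem stmt11 (κ : ℝ) (hκ : 1 ≤ κ) :
    ∃ c > (0 : ℝ),
      ∀ (Ω : Type) [MeasureSpace Ω], IsProbabilityMeasure (ℙ : Measure Ω) →
      ∀ (n : ℕ) (ξ : Fin n → Ω → ℂ),
        (∀ j, Measurable (ξ j)) →
        iIndepFun ξ ℙ →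
        (∀ j, Controlled κ (ξ j)) →
        ∀ (z : ℂ) (v : Fin n → ℂ), (∑ j, ‖v j‖ ^ 2) = 1 →
          (ℙ {ω | ‖(∑ j, ξ j ω * v j) - z‖ ≤ c}).toReal ≤ 1 - c := by
  set c : ℝ := 1 / (192 * κ ^ 6)
  refine ⟨c, by positivity, fun Ω _ _ n ξ hξ hind hctrl z v hv => ?_⟩
  obtain ⟨u, hu, hφ⟩ := exists_sq_norm_integral_cexp_re_mul_le hκ hξ hind hctrl z hv
  set Y : Ω → ℝ := fun ω => κ⁻¹ * (u * ((∑ j, ξ j ω * v j) - z)).re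
  have hsub : {ω | ‖(∑ j, ξ j ω * v j) - z‖ ≤ c} ⊆ {ω | |Y ω| ≤ c} := fun ω hω =>
    calc |Y ω| ≤ 1 * ‖u * ((∑ j, ξ j ω * v j) - z)‖ := by
          rw [abs_mul, abs_of_pos (inv_pos.2 (by linarith))]
          exact mul_le_mul (inv_le_one_of_one_le₀ hκ) (abs_re_le_norm _) (abs_nonneg _) zero_le_one
      _ ≤ c := by rwa [one_mul, norm_mul, hu, one_mul]
  calc (ℙ {ω | ‖(∑ j, ξ j ω * v j) - z‖ ≤ c}).toReal
      ≤ (ℙ : Measure Ω).real {ω | |Y ω| ≤ c} := measureReal_mono hsub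
    _ ≤ 1 - c :=
      measureReal_abs_le_le_of_sq_norm_integral_cexp_le (by fun_prop) (by positivity)
        (le_of_eq (by ring)) hφ
end

section
/- (Moment bound for linear forms) Let γ ≥ 1/2 and let α'_1,...,α'_n be independent complex random variables with E α'_i = 0, E|α'_i|² = O(1), and E|α'_i|^j = O_j(n^{(j−2)γ}) for each j > 2. Then for every integer k ≥ 0 and every vector w = (w_1,...,w_n) with ‖w‖_∞ ≤ 1, E|w_1 α'_1 + ... + w_n α'_n|^{2k} = O_k(n^{2kγ}). -/
/-!
Expand `|S|^{2k} = S^k \bar S^k` for `S = ∑ βᵢ`, `βᵢ = wᵢ α'ᵢ`, into monomials indexed by pairs of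
maps `p, q : Fin k → Fin n`. By independence the expectation of a monomial factors over the
indices `i`, and it vanishes as soon as some index occurs exactly once, since the `βᵢ` are
centred. So only monomials whose support `R` has every index repeated survive; then `|R| ≤ k`
and, with `E|βᵢ|^m ≤ D s^{m-2}` for `s = n^γ`, such a monomial contributes at most
`D^k s^{2k-2|R|}`. There are at most `n^{|R|} ≤ s^{2|R|}` supports of a given size (here
`γ ≥ 1/2` is used) and at most `|R|^{2k}` pairs `(p, q)` with support `R`, which gives
`E|S|^{2k} ≤ (k+1) k^{2k} D^k s^{2k}`.
-/

open MeasureTheory ProbabilityTheory Finset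
open scoped ENNReal ComplexConjugate

lemma MeasureTheory.memLp_of_integrable_norm_pow {α F : Type*} {mα : MeasurableSpace α}
    {μ : Measure α} [NormedAddCommGroup F] {f : α → F} {n : ℕ}
    (hf : AEStronglyMeasurable f μ) (h : Integrable (fun x ↦ ‖f x‖ ^ n) μ) : MemLp f n μ := by
  rcases eq_or_ne n 0 with rfl | hn
  · simpa using memLp_zero_iff_aestronglyMeasurable.mpr hf
  rw [← integrable_norm_rpow_iff hf (by simpa using hn) (by simp)]
  simpa using h

section Independence

variable {Ω E : Type*} {mΩ : MeasurableSpace Ω} {μ : Measure Ω}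
  [NormedAddCommGroup E] [MeasurableSpace E] [BorelSpace E] [SecondCountableTopology E]

/- By Fubini, `x ↦ x + y` is in `Lᵖ` of the law of `X` for almost every `y`; fix one such `y`. -/
lemma ProbabilityTheory.IndepFun.memLp_left_of_memLp_add [IsProbabilityMeasure μ]
    {X Y : Ω → E} {p : ℝ≥0∞} (hp : p ≠ ∞) (hXY : X ⟂ᵢ[μ] Y) (hX : AEMeasurable X μ)
    (hY : AEMeasurable Y μ) (h : MemLp (fun ω ↦ X ω + Y ω) p μ) : MemLp X p μ := by
  rcases eq_or_ne p 0 with rfl | hp0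
  · exact memLp_zero_iff_aestronglyMeasurable.mpr hX.aestronglyMeasurable
  have := Measure.isProbabilityMeasure_map (μ := μ) hY
  have hadd : MemLp (fun z : E × E ↦ z.1 + z.2) p ((μ.map X).prod (μ.map Y)) := by
    rw [← (indepFun_iff_map_prod_eq_prod_map_map hX hY).mp hXY,
      memLp_map_measure_iff (by fun_prop) (hX.prodMk hY)]
    exact h
  obtain ⟨y, hy⟩ :=
    ((integrable_norm_rpow_iff (by fun_prop) hp0 hp).mpr hadd).prod_left_ae.exists
  have hshift : MemLp (fun x : E ↦ x + y) p (μ.map X) :=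
    (integrable_norm_rpow_iff (by fun_prop) hp0 hp).mp hy
  have hid : MemLp id p (μ.map X) := by
    convert hshift.sub (memLp_const y) using 1
    ext x
    simp
  exact (memLp_map_measure_iff aestronglyMeasurable_id hX).mp hid

lemma ProbabilityTheory.iIndepFun.memLp_of_memLp_sum {ι : Type*} [Fintype ι] {X : ι → Ω → E}
    {p : ℝ≥0∞} (hp : p ≠ ∞) (hind : iIndepFun X μ) (hX : ∀ i, Measurable (X i))
    (h : MemLp (fun ω ↦ ∑ i, X i ω) p μ) (i : ι) : MemLp (X i) p μ := by
  classical
  have := hind.isProbabilityMeasure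
  have hrest : X i ⟂ᵢ[μ] fun ω ↦ ∑ j ∈ univ.erase i, X j ω := by
    simpa only [Finset.sum_fn] using
      (hind.indepFun_finsetSum_of_notMem hX (notMem_erase i univ)).symm
  refine hrest.memLp_left_of_memLp_add hp (hX i).aemeasurable
    (Finset.measurable_sum _ fun j _ ↦ hX j).aemeasurable ?_
  simpa [add_sum_erase] using h

end Independence

section FiberCard

variable {κ ι : Type*} [Fintype κ] [DecidableEq ι]

def fiberCard (p : κ → ι) (i : ι) : ℕ := #{t | p t = i}

lemma fiberCard_ne_zero_iff {p : κ → ι} {i : ι} : fiberCard p i ≠ 0 ↔ ∃ t, p t = i := by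
  simp [fiberCard, Finset.card_eq_zero, Finset.filter_eq_empty_iff]

variable [Fintype ι]

lemma sum_fiberCard (p : κ → ι) : ∑ i, fiberCard p i = Fintype.card κ := by
  simpa [fiberCard] using (card_eq_sum_card_fiberwise (f := p) (s := univ) (t := univ)
    fun _ _ ↦ mem_univ _).symm

lemma prod_comp_eq_prod_pow_fiberCard {M : Type*} [CommMonoid M] (f : ι → M) (p : κ → ι) :
    ∏ t, f (p t) = ∏ i, f i ^ fiberCard p i := by
  rw [← prod_fiberwise univ p]
  refine prod_congr rfl fun i _ ↦ ?_
  rw [prod_congr rfl fun t ht ↦ congrArg f (mem_filter.1 ht).2, prod_const]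
  rfl

end FiberCard

section MixedMonomial

variable {ι : Type*} [Fintype ι]

def mixedMonomial (a b : ι → ℕ) (z : ι → ℂ) : ℂ := ∏ i, z i ^ a i * conj (z i) ^ b i

lemma norm_mixedMonomial_le (a b : ι → ℕ) (z : ι → ℂ) :
    ‖mixedMonomial a b z‖ ≤ (∑ i, ‖z i‖) ^ ∑ i, (a i + b i) := by
  rw [mixedMonomial, norm_prod, ← prod_pow_eq_pow_sum]
  gcongr with i
  rw [norm_mul, norm_pow, norm_pow, Complex.norm_conj, ← pow_add]
  gcongr
  exact single_le_sum (fun j _ ↦ norm_nonneg (z j)) (mem_univ i)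

lemma ofReal_norm_sum_pow_eq_sum_mixedMonomial [DecidableEq ι] (z : ι → ℂ) (k : ℕ) :
    ((‖∑ i, z i‖ ^ (2 * k) : ℝ) : ℂ) =
      ∑ p : Fin k → ι, ∑ q : Fin k → ι, mixedMonomial (fiberCard p) (fiberCard q) z := by
  have hpow (w : ℂ) : w ^ k = ∏ _t : Fin k, w := by simp
  rw [pow_mul, Complex.ofReal_pow, Complex.ofReal_pow, ← Complex.mul_conj', mul_pow, hpow,
    hpow, map_sum, Fintype.prod_sum, Fintype.prod_sum, sum_mul_sum]
  simp only [mixedMonomial, prod_mul_distrib, prod_comp_eq_prod_pow_fiberCard (fun i ↦ z i),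
    prod_comp_eq_prod_pow_fiberCard (fun i ↦ conj (z i))]

end MixedMonomial

section Counting

variable {ι : Type*} [Fintype ι]

lemma sum_pairs_le_sum_card_pow [DecidableEq ι] (k : ℕ) (h : ℕ → ℝ) (hh : ∀ r, 0 ≤ h r) :
    ∑ p : Fin k → ι, ∑ q : Fin k → ι, h #{i | fiberCard p i + fiberCard q i ≠ 0} ≤
      ∑ R : Finset ι, (#R : ℝ) ^ (2 * k) * h #R := by
  set supp : (Fin k → ι) × (Fin k → ι) → Finset ι :=
    fun x ↦ {i | fiberCard x.1 i + fiberCard x.2 i ≠ 0}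
  rw [← Fintype.sum_prod_type' (f := fun p q ↦ h (supp (p, q)).card),
    ← sum_fiberwise univ supp]
  refine sum_le_sum fun R _ ↦ ?_
  have hfiber : ({x | supp x = R} : Finset _) ⊆
      (Fintype.piFinset fun _ ↦ R) ×ˢ (Fintype.piFinset fun _ ↦ R) := by
    intro x hx
    obtain rfl := (mem_filter.1 hx).2
    simp only [mem_product, Fintype.mem_piFinset, supp, mem_filter, mem_univ, true_and]
    exact ⟨fun t ↦ by simp [fiberCard_ne_zero_iff.2 ⟨t, rfl⟩],
      fun t ↦ by simp [fiberCard_ne_zero_iff.2 ⟨t, rfl⟩]⟩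
  have hcard : (#{x | supp x = R} : ℝ) ≤ (#R : ℝ) ^ (2 * k) := by
    have := card_le_card hfiber
    rw [card_product, Fintype.card_piFinset_const, ← pow_add, ← two_mul] at this
    exact_mod_cast this
  calc ∑ x ∈ {x | supp x = R}, h #(supp x) = #{x | supp x = R} * h #R := by
        rw [sum_congr rfl fun x hx ↦ by rw [(mem_filter.1 hx).2], sum_const, nsmul_eq_mul]
    _ ≤ (#R : ℝ) ^ (2 * k) * h #R := by gcongr; exact hh _

/- There are `(N choose r) ≤ N ^ r ≤ s ^ (2 r)` subsets of size `r`. -/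
lemma sum_card_pow_mul_le {s : ℝ} (hs : 0 ≤ s) (hN : (Fintype.card ι : ℝ) ≤ s ^ 2) (k : ℕ) :
    ∑ R : Finset ι, (#R : ℝ) ^ (2 * k) * (if #R ≤ k then s ^ (2 * k - 2 * #R) else 0) ≤
      (k + 1) * k ^ (2 * k) * s ^ (2 * k) := by
  rw [← powerset_univ, sum_powerset_apply_card
    (f := fun r ↦ (r : ℝ) ^ (2 * k) * (if r ≤ k then s ^ (2 * k - 2 * r) else 0)), card_univ]
  set N := Fintype.card ι
  have hterm : ∀ r ∈ range (N + 1),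
      N.choose r • ((r : ℝ) ^ (2 * k) * (if r ≤ k then s ^ (2 * k - 2 * r) else 0)) ≤
        if r ≤ k then (k : ℝ) ^ (2 * k) * s ^ (2 * k) else 0 := by
    intro r _
    split_ifs with hrk
    · have hchoose : (N.choose r : ℝ) ≤ s ^ (2 * r) := by
        rw [pow_mul]
        exact (Nat.cast_le.2 (Nat.choose_le_pow N r)).trans (by push_cast; gcongr)
      calc N.choose r • ((r : ℝ) ^ (2 * k) * s ^ (2 * k - 2 * r))
          ≤ s ^ (2 * r) * ((k : ℝ) ^ (2 * k) * s ^ (2 * k - 2 * r)) := by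
            rw [nsmul_eq_mul]; gcongr
        _ = (k : ℝ) ^ (2 * k) * s ^ (2 * k) := by
            rw [mul_left_comm, ← pow_add, Nat.add_sub_cancel' (by omega)]
    · simp
  calc _ ≤ ∑ r ∈ range (N + 1), if r ≤ k then (k : ℝ) ^ (2 * k) * s ^ (2 * k) else 0 :=
        sum_le_sum hterm
    _ = ∑ r ∈ range (N + 1) with r ≤ k, (k : ℝ) ^ (2 * k) * s ^ (2 * k) := (sum_filter _ _).symm
    _ ≤ ∑ r ∈ range (k + 1), (k : ℝ) ^ (2 * k) * s ^ (2 * k) :=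
        sum_le_sum_of_subset_of_nonneg (fun r hr ↦ by simp at hr ⊢; omega)
          fun _ _ _ ↦ by positivity
    _ = (k + 1) * k ^ (2 * k) * s ^ (2 * k) := by simp [mul_assoc]

end Counting

section Moments

variable {Ω ι : Type*} {mΩ : MeasurableSpace Ω} {μ : Measure Ω} [Fintype ι] {β : ι → Ω → ℂ}

lemma integral_pow_mul_conj_pow_eq_zero {X : Ω → ℂ} (hX : ∫ ω, X ω ∂μ = 0) {a b : ℕ}
    (hab : a + b = 1) : ∫ ω, X ω ^ a * conj (X ω) ^ b ∂μ = 0 := by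
  rcases Nat.add_eq_one_iff.1 hab with ⟨rfl, rfl⟩ | ⟨rfl, rfl⟩
  · simpa [integral_conj] using congrArg conj hX
  · simpa using hX

lemma integral_mixedMonomial (hind : iIndepFun β μ) (hβ : ∀ i, Measurable (β i))
    (a b : ι → ℕ) :
    ∫ ω, mixedMonomial a b (β · ω) ∂μ = ∏ i, ∫ ω, β i ω ^ a i * conj (β i ω) ^ b i ∂μ :=
  hind.integral_fun_prod_comp (fun i ↦ (hβ i).aemeasurable)
    fun i ↦ (by fun_prop : Continuous fun z : ℂ ↦ z ^ a i * conj z ^ b i).aestronglyMeasurable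

lemma integrable_mixedMonomial [IsFiniteMeasure μ] {n : ℕ} (hβ : ∀ i, Measurable (β i))
    (hLp : ∀ i, MemLp (β i) n μ) {a b : ι → ℕ} (hab : ∑ i, (a i + b i) = n) :
    Integrable (fun ω ↦ mixedMonomial a b (β · ω)) μ := by
  have hsum : MemLp (fun ω ↦ ∑ i, ‖β i ω‖) n μ :=
    memLp_finsetSum _ fun i _ ↦ (hLp i).norm
  refine hsum.integrable_norm_pow'.mono' ?_ (ae_of_all _ fun ω ↦ ?_)
  · exact ((by unfold mixedMonomial; fun_prop : Continuous (mixedMonomial a b)).measurable.comp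
      (measurable_pi_lambda _ hβ)).aestronglyMeasurable
  · rw [Real.norm_of_nonneg (by positivity), ← hab]
    exact norm_mixedMonomial_le a b _

/- A factor with `a i + b i = 1` has mean zero; every other index of the support carries
`a i + b i ≥ 2`, so the support has at most `k` elements. -/
lemma norm_integral_mixedMonomial_le [DecidableEq ι] (hind : iIndepFun β μ)
    (hβ : ∀ i, Measurable (β i)) (hmean : ∀ i, ∫ ω, β i ω ∂μ = 0) {k : ℕ} {s D : ℝ}
    (hs : 0 ≤ s) (hD : 1 ≤ D)
    (hmom : ∀ i m, 2 ≤ m → m ≤ 2 * k → ∫ ω, ‖β i ω‖ ^ m ∂μ ≤ D * s ^ (m - 2))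
    {a b : ι → ℕ} (hab : ∑ i, (a i + b i) = 2 * k) :
    ‖∫ ω, mixedMonomial a b (β · ω) ∂μ‖ ≤
      D ^ k * if #{i | a i + b i ≠ 0} ≤ k then s ^ (2 * k - 2 * #{i | a i + b i ≠ 0}) else 0 := by
  have := hind.isProbabilityMeasure
  rw [integral_mixedMonomial hind hβ]
  by_cases hsingle : ∃ i, a i + b i = 1
  · obtain ⟨i, hi⟩ := hsingle
    rw [prod_eq_zero (mem_univ i) (integral_pow_mul_conj_pow_eq_zero (hmean i) hi), norm_zero]
    positivity
  push Not at hsingle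
  set R : Finset ι := {i | a i + b i ≠ 0}
  have hR : ∀ i ∈ R, 2 ≤ a i + b i := fun i hi ↦ by
    have := hsingle i
    simp only [R, mem_filter, mem_univ, true_and] at hi
    omega
  have hsumR : ∑ i ∈ R, (a i + b i) = 2 * k := by rw [sum_filter_ne_zero, hab]
  have hRk : #R ≤ k := by
    have := card_nsmul_le_sum R _ 2 hR
    rw [smul_eq_mul, hsumR] at this
    omega
  have houtside : ∀ i ∉ R, ∫ ω, β i ω ^ a i * conj (β i ω) ^ b i ∂μ = 1 := fun i hi ↦ by
    simp only [R, mem_filter, mem_univ, true_and, not_not, Nat.add_eq_zero_iff] at hi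
    simp [hi.1, hi.2]
  have hfactor : ∀ i ∈ R, ‖∫ ω, β i ω ^ a i * conj (β i ω) ^ b i ∂μ‖ ≤
      D * s ^ (a i + b i - 2) := fun i hi ↦ calc
    _ ≤ ∫ ω, ‖β i ω ^ a i * conj (β i ω) ^ b i‖ ∂μ := norm_integral_le_integral_norm _
    _ = ∫ ω, ‖β i ω‖ ^ (a i + b i) ∂μ := by simp [pow_add]
    _ ≤ D * s ^ (a i + b i - 2) := hmom i _ (hR i hi)
        ((single_le_sum (f := fun j ↦ a j + b j) (fun j _ ↦ Nat.zero_le _) hi).trans_eq hsumR)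
  rw [if_pos hRk, norm_prod, ← prod_subset (subset_univ R) fun i _ hi ↦ by
    rw [houtside i hi, norm_one]]
  calc ∏ i ∈ R, ‖∫ ω, β i ω ^ a i * conj (β i ω) ^ b i ∂μ‖
      ≤ ∏ i ∈ R, D * s ^ (a i + b i - 2) := prod_le_prod (fun _ _ ↦ norm_nonneg _) hfactor
    _ = D ^ #R * s ^ (2 * k - 2 * #R) := by
      rw [prod_mul_distrib, prod_const, prod_pow_eq_pow_sum, sum_tsub_distrib _ hR, hsumR,
        sum_const, smul_eq_mul, mul_comm #R]
    _ ≤ D ^ k * s ^ (2 * k - 2 * #R) := by gcongr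

/- Without integrability of `‖∑ βᵢ‖ ^ (2k)` the left side is `0`; with it, independence
puts every `βᵢ` in `L^{2k}`, which makes the expansion into monomials integrable termwise. -/
theorem integral_norm_sum_pow_le (hind : iIndepFun β μ) (hβ : ∀ i, Measurable (β i))
    (hmean : ∀ i, ∫ ω, β i ω ∂μ = 0) {k : ℕ} {s D : ℝ} (hs : 0 ≤ s)
    (hcard : (Fintype.card ι : ℝ) ≤ s ^ 2) (hD : 1 ≤ D)
    (hmom : ∀ i m, 2 ≤ m → m ≤ 2 * k → ∫ ω, ‖β i ω‖ ^ m ∂μ ≤ D * s ^ (m - 2)) :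
    ∫ ω, ‖∑ i, β i ω‖ ^ (2 * k) ∂μ ≤ (k + 1) * k ^ (2 * k) * D ^ k * s ^ (2 * k) := by
  classical
  have := hind.isProbabilityMeasure
  by_cases hint : Integrable (fun ω ↦ ‖∑ i, β i ω‖ ^ (2 * k)) μ
  swap
  · rw [integral_undef hint]
    positivity
  have hLp : ∀ i, MemLp (β i) (2 * k : ℕ) μ := hind.memLp_of_memLp_sum (ENNReal.natCast_ne_top _) hβ
    (memLp_of_integrable_norm_pow (by fun_prop) hint)
  have hdeg : ∀ p q : Fin k → ι, ∑ i, (fiberCard p i + fiberCard q i) = 2 * k := fun p q ↦ by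
    rw [sum_add_distrib, sum_fiberCard, sum_fiberCard, Fintype.card_fin, two_mul]
  set T : (Fin k → ι) → (Fin k → ι) → Ω → ℂ :=
    fun p q ω ↦ mixedMonomial (fiberCard p) (fiberCard q) (β · ω)
  have hT : ∀ p q, Integrable (T p q) μ := fun p q ↦ integrable_mixedMonomial hβ hLp (hdeg p q)
  let weight : ℕ → ℝ := fun r ↦ if r ≤ k then s ^ (2 * k - 2 * r) else 0
  calc ∫ ω, ‖∑ i, β i ω‖ ^ (2 * k) ∂μ = RCLike.re (∫ ω, ∑ p, ∑ q, T p q ω ∂μ) := by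
        rw [← integral_re (integrable_finsetSum _ fun p _ ↦ integrable_finsetSum _ fun q _ ↦
          hT p q)]
        simp_rw [T, ← ofReal_norm_sum_pow_eq_sum_mixedMonomial, RCLike.re_to_complex,
          Complex.ofReal_re]
    _ ≤ ‖∑ p, ∑ q, ∫ ω, T p q ω ∂μ‖ := by
        rw [integral_finsetSum _ fun p _ ↦ integrable_finsetSum _ fun q _ ↦ hT p q]
        simp_rw [integral_finsetSum _ fun q _ ↦ hT _ q]
        exact RCLike.re_le_norm _
    _ ≤ ∑ p, ∑ q, ‖∫ ω, T p q ω ∂μ‖ :=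
        (norm_sum_le _ _).trans (sum_le_sum fun p _ ↦ norm_sum_le _ _)
    _ ≤ ∑ p, ∑ q, D ^ k * weight #{i | fiberCard p i + fiberCard q i ≠ 0} := by
        gcongr with p _ q _
        exact norm_integral_mixedMonomial_le hind hβ hmean hs hD hmom (hdeg p q)
    _ ≤ D ^ k * ∑ R : Finset ι, (#R : ℝ) ^ (2 * k) * weight #R := by
        simp_rw [← mul_sum]
        gcongr
        exact sum_pairs_le_sum_card_pow k weight fun r ↦ by positivity
    _ ≤ D ^ k * ((k + 1) * k ^ (2 * k) * s ^ (2 * k)) := by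
        gcongr
        exact sum_card_pow_mul_le hs hcard k
    _ = (k + 1) * k ^ (2 * k) * D ^ k * s ^ (2 * k) := by ring

lemma integral_norm_const_mul_pow_le {X : Ω → ℂ} {c : ℂ} (hc : ‖c‖ ≤ 1) (m : ℕ) :
    ∫ ω, ‖c * X ω‖ ^ m ∂μ ≤ ∫ ω, ‖X ω‖ ^ m ∂μ := calc
  _ = ‖c‖ ^ m * ∫ ω, ‖X ω‖ ^ m ∂μ := by simp_rw [norm_mul, mul_pow, integral_const_mul]
  _ ≤ ∫ ω, ‖X ω‖ ^ m ∂μ := mul_le_of_le_one_left (integral_nonneg fun _ ↦ by positivity)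
      (pow_le_one₀ (norm_nonneg _) hc)

end Moments

lemma natCast_le_rpow_pow_two {γ : ℝ} (hγ : 1 / 2 ≤ γ) (n : ℕ) : (n : ℝ) ≤ ((n : ℝ) ^ γ) ^ 2 := by
  rw [← Real.rpow_natCast, ← Real.rpow_mul n.cast_nonneg]
  rcases n.eq_zero_or_pos with rfl | hn
  · simpa using Real.rpow_nonneg le_rfl (γ * 2)
  calc (n : ℝ) = (n : ℝ) ^ (1 : ℝ) := (Real.rpow_one _).symm
    _ ≤ (n : ℝ) ^ (γ * (2 : ℕ)) :=
      Real.rpow_le_rpow_of_exponent_le (by exact_mod_cast hn) (by push_cast; linarith)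


/-- Moment bound for linear forms: if `α'₁,…,α'ₙ` are independent, mean zero,
with `E|α'_i|² ≤ K` and `E|α'_i|^j ≤ C_j n^{(j−2)γ}` for `j > 2`, then for each
`k` there is a constant `C'_k` (depending only on `k, K, C`) with
`E|∑ w_i α'_i|^{2k} ≤ C'_k n^{2kγ}` whenever `‖w‖_∞ ≤ 1`. -/
theorem stmt14 (γ : ℝ) (hγ : 1 / 2 ≤ γ) (K : ℝ) (C : ℕ → ℝ) (k : ℕ) :
    ∃ Ck : ℝ,
      ∀ (Ω : Type) [MeasureSpace Ω], IsProbabilityMeasure (ℙ : Measure Ω) →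
      ∀ (n : ℕ) (α : Fin n → Ω → ℂ),
        (∀ i, Measurable (α i)) →
        iIndepFun α ℙ →
        (∀ i, (∫ ω, α i ω) = 0) →
        (∀ i, (∫ ω, ‖α i ω‖ ^ 2) ≤ K) →
        (∀ i, ∀ j : ℕ, 2 < j →
          (∫ ω, ‖α i ω‖ ^ j) ≤ C j * (n : ℝ) ^ (((j : ℝ) - 2) * γ)) →
        ∀ w : Fin n → ℂ, (∀ i, ‖w i‖ ≤ 1) →
          (∫ ω, ‖∑ i, w i * α i ω‖ ^ (2 * k)) ≤ Ck * (n : ℝ) ^ (2 * (k : ℝ) * γ) := by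
  obtain ⟨D, hD, hKD, hCD⟩ : ∃ D : ℝ, 1 ≤ D ∧ K ≤ D ∧ ∀ j ≤ 2 * k, C j ≤ D := by
    obtain ⟨c, hc⟩ := ((range (2 * k + 1)).image C).bddAbove
    refine ⟨max 1 (max K c), le_max_left _ _, by simp, fun j hj ↦ ?_⟩
    have : C j ≤ c := hc (mem_image_of_mem C (mem_range.2 (by omega)))
    simp [this]
  refine ⟨(k + 1) * k ^ (2 * k) * D ^ k, fun Ω _ _ n α hmeas hind hmean hvar hmom w hw ↦ ?_⟩
  have hn : (0 : ℝ) ≤ n := n.cast_nonneg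
  have hpow (m : ℕ) : ((n : ℝ) ^ γ) ^ m = (n : ℝ) ^ ((m : ℝ) * γ) := by
    rw [← Real.rpow_natCast, ← Real.rpow_mul hn, mul_comm]
  have hαmom : ∀ i m, 2 ≤ m → m ≤ 2 * k → ∫ ω, ‖α i ω‖ ^ m ≤ D * ((n : ℝ) ^ γ) ^ (m - 2) := by
    intro i m hm2 hmk
    rcases hm2.eq_or_lt with rfl | hm2
    · simpa using (hvar i).trans hKD
    rw [hpow, Nat.cast_sub hm2.le, Nat.cast_ofNat]
    exact (hmom i m hm2).trans (by gcongr; exact hCD m hmk)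
  have key := integral_norm_sum_pow_le (β := fun i ω ↦ w i * α i ω)
    (hind.comp _ fun i ↦ measurable_const_mul (w i)) (fun i ↦ (hmeas i).const_mul _)
    (fun i ↦ by rw [integral_const_mul, hmean i, mul_zero]) (Real.rpow_nonneg hn γ)
    (by simpa using natCast_le_rpow_pow_two hγ n) hD
    fun i m hm2 hmk ↦ (integral_norm_const_mul_pow_le (hw i) m).trans (hαmom i m hm2 hmk)
  rwa [hpow, Nat.cast_mul, Nat.cast_ofNat] at key
end
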